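/- Let q be an odd prime power and F_q the finite field with q elements, and for x ∈ F_q² write ‖x‖ = x₁² + x₂². There exist constants C > 0 and c > 0 such that the following holds: if E ⊆ F_q² and ρ is a real number with C/√q ≤ ρ ≤ 1 and |E| ≥ ρq², then the number of triples (a,b,c) ∈ F_q³ for which there exists (x,y,z) ∈ E × E × E with ‖x−y‖ = a, ‖x−z‖ = b and ‖y−z‖ = c is at least cρq³. -/

import Mathlib

/-!
Writing `ν(a)` for the number of pairs of `E` at distance `a`, Fourier analysis on `F_q` bounds
the distance energy: `q ∑ ν(a)² ≤ |E|⁴ + q³|E|²`. Parseval in the distance variable turns the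
left side into `∑ₛ |∑_{x,y ∈ E} ψ(s‖x - y‖)|²`; the term `s = 0` is `|E|⁴`, and for `s ≠ 0` the
kernels `x ↦ ψ(s‖x - y‖)` are orthogonal in `y` because the quadratic parts of
`‖x - y‖ - ‖x - y'‖` cancel, which bounds the term by `|E|²q²`. Cauchy–Schwarz then shows that
`E` has `≥ 4q/5` distinct distances once `|E|² ≥ 4q³`.

For each nonzero distance `a = ‖x - y‖` with `x, y ∈ E`, the map `z ↦ (‖x - z‖, ‖y - z‖)` is at
most two-to-one: these two values fix the dot product of `x - z` with `x - y`, hence, by Lagrange's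
identity, the square of their cross product, and the two products determine `z`. So there are
at least `|E|/2` triangles with first side `a`, and at least `q|E|/4` triangles in total.
-/

/-- The norm `‖x‖ = x₁² + x₂²` on `F_q²`. -/
def fnorm {F : Type*} [Field F] (x : Fin 2 → F) : F := x 0 ^ 2 + x 1 ^ 2

open Finset ComplexConjugate

theorem sum_norm_sq_sum_of_orthogonal {G ι : Type*} [Fintype G] [DecidableEq ι] (s : Finset ι)
    (χ : ι → G → ℂ) (N : ℝ)
    (hχ : ∀ i ∈ s, ∀ j ∈ s, ∑ g, χ i g * conj (χ j g) = if i = j then (N : ℂ) else 0)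
    (c : ι → ℂ) :
    ∑ g, ‖∑ i ∈ s, c i * χ i g‖ ^ 2 = N * ∑ i ∈ s, ‖c i‖ ^ 2 := by
  apply Complex.ofReal_injective
  push_cast
  calc ∑ g, ((‖∑ i ∈ s, c i * χ i g‖ : ℂ)) ^ 2
      = ∑ i ∈ s, ∑ j ∈ s, c i * conj (c j) * ∑ g, χ i g * conj (χ j g) := by
        simp_rw [← Complex.mul_conj', map_sum, map_mul, sum_mul_sum, mul_sum]
        rw [sum_comm]
        refine sum_congr rfl fun i _ => ?_
        rw [sum_comm]
        refine sum_congr rfl fun j _ => sum_congr rfl fun g _ => by ring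
    _ = N * ∑ i ∈ s, (‖c i‖ : ℂ) ^ 2 := by
        rw [mul_sum]
        refine sum_congr rfl fun i hi => ?_
        rw [sum_congr rfl fun j hj => by rw [hχ i hi j hj]]
        simp [hi, Complex.mul_conj', mul_comm]

theorem AddChar.map_sum_eq_prod {G M ι : Type*} [AddCommMonoid G] [CommMonoid M] (ψ : AddChar G M)
    (s : Finset ι) (f : ι → G) : ψ (∑ i ∈ s, f i) = ∏ i ∈ s, ψ (f i) := by
  classical
  induction s using Finset.induction_on with
  | empty => simp
  | insert a s ha ih => rw [sum_insert ha, prod_insert ha, AddChar.map_add_eq_mul, ih]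

theorem AddChar.mul_conj_eq_apply_sub {G : Type*} [AddCommGroup G] [Finite G] (ψ : AddChar G ℂ)
    (u v : G) : ψ u * conj (ψ v) = ψ (u - v) := by
  rw [← AddChar.map_neg_eq_conj, ← AddChar.map_add_eq_mul, sub_eq_add_neg]

theorem sq_card_le_card_image_mul_sum_sq {α β : Type*} [DecidableEq β] (s : Finset α)
    (f : α → β) : #s ^ 2 ≤ #(s.image f) * ∑ b ∈ s.image f, #{a ∈ s | f a = b} ^ 2 := by
  rw [card_eq_sum_card_image f s]
  exact sq_sum_le_card_mul_sum_sq

section Plane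

variable {F : Type*} [Field F]

def cross (u w : Fin 2 → F) : F := u 0 * w 1 - u 1 * w 0

theorem dotProduct_sq_add_cross_sq (u w : Fin 2 → F) :
    (u ⬝ᵥ w) ^ 2 + cross u w ^ 2 = fnorm u * fnorm w := by
  simp only [dotProduct, Fin.sum_univ_two, cross, fnorm]
  ring

theorem eq_of_dotProduct_eq_of_cross_eq {u v w : Fin 2 → F} (hw : fnorm w ≠ 0)
    (hd : u ⬝ᵥ w = v ⬝ᵥ w) (hc : cross u w = cross v w) : u = v := by
  simp only [dotProduct, Fin.sum_univ_two, cross] at hd hc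
  refine funext (Fin.forall_fin_two.2 ⟨?_, ?_⟩)
  · exact mul_right_cancel₀ hw (by simp only [fnorm]; linear_combination w 0 * hd + w 1 * hc)
  · exact mul_right_cancel₀ hw (by simp only [fnorm]; linear_combination w 1 * hd - w 0 * hc)

theorem card_filter_fnorm_sub_pair_eq_le_two [DecidableEq F] (h2 : (2 : F) ≠ 0) {x y : Fin 2 → F}
    (hxy : fnorm (x - y) ≠ 0) (s : Finset (Fin 2 → F)) (bc : F × F) :
    #{z ∈ s | (fnorm (x - z), fnorm (y - z)) = bc} ≤ 2 := by
  set w := x - y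
  set k := (bc.1 + fnorm w - bc.2) / 2
  have hfiber : ∀ z ∈ {z ∈ s | (fnorm (x - z), fnorm (y - z)) = bc},
      (x - z) ⬝ᵥ w = k ∧ cross (x - z) w ^ 2 = bc.1 * fnorm w - k ^ 2 := by
    intro z hz
    obtain ⟨hb, hc⟩ := Prod.ext_iff.1 (mem_filter.1 hz).2
    have hdot : (x - z) ⬝ᵥ w = k := by
      rw [eq_div_iff h2, ← hb, ← hc]
      simp only [w, dotProduct, Fin.sum_univ_two, fnorm, Pi.sub_apply]
      ring
    refine ⟨hdot, ?_⟩
    rw [← hdot, ← hb, eq_sub_iff_add_eq', dotProduct_sq_add_cross_sq]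
  calc #{z ∈ s | (fnorm (x - z), fnorm (y - z)) = bc}
      ≤ #(Polynomial.nthRootsFinset 2 (bc.1 * fnorm w - k ^ 2)) := by
        refine card_le_card_of_injOn (fun z => cross (x - z) w) (fun z hz => ?_)
          fun z hz z' hz' h => ?_
        · exact (Polynomial.mem_nthRootsFinset two_pos _).2 (hfiber z hz).2
        · simpa using eq_of_dotProduct_eq_of_cross_eq hxy
            ((hfiber z hz).1.trans (hfiber z' hz').1.symm) h
    _ ≤ 2 := by
        rw [Polynomial.nthRootsFinset_def]
        exact (Multiset.toFinset_card_le _).trans (Polynomial.card_nthRoots 2 _)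

end Plane

section FiniteField

variable {F : Type*} [Field F] [Fintype F]

theorem two_ne_zero_of_odd_card (hodd : Odd (Fintype.card F)) : (2 : F) ≠ 0 :=
  Ring.two_ne_zero fun h => by
    have := FiniteField.even_card_iff_char_two.mp h
    rw [Nat.odd_iff] at hodd
    omega

variable [DecidableEq F]

theorem sum_addChar_dotProduct {ι : Type*} [Fintype ι] [DecidableEq ι] {ψ : AddChar F ℂ}
    (hψ : ψ.IsPrimitive) (m : ι → F) :
    ∑ x : ι → F, ψ (x ⬝ᵥ m) = if m = 0 then (Fintype.card F : ℂ) ^ Fintype.card ι else 0 := by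
  simp only [dotProduct, AddChar.map_sum_eq_prod]
  rw [← Fintype.prod_sum (fun i t => ψ (t * m i))]
  simp only [AddChar.sum_mulShift _ hψ, Nat.cast_ite, Nat.cast_zero, prod_ite_zero, prod_const,
    card_univ, mem_univ, true_imp_iff, funext_iff, Pi.zero_apply]

theorem sum_norm_sq_sum_addChar_mul {ψ : AddChar F ℂ} (hψ : ψ.IsPrimitive) {α : Type*}
    (s : Finset α) (f : α → F) :
    ∑ t, ‖∑ p ∈ s, ψ (t * f p)‖ ^ 2 = Fintype.card F * ∑ a, (#{p ∈ s | f p = a} : ℝ) ^ 2 := by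
  have hfiber (t : F) : ∑ p ∈ s, ψ (t * f p) = ∑ a, (#{p ∈ s | f p = a} : ℂ) * ψ (t * a) := by
    rw [← sum_fiberwise s f]
    refine sum_congr rfl fun a _ => ?_
    rw [sum_congr rfl fun p hp => by rw [(mem_filter.1 hp).2], sum_const, nsmul_eq_mul]
  simp_rw [hfiber]
  rw [sum_norm_sq_sum_of_orthogonal univ (fun a t => ψ (t * a)) (Fintype.card F) fun a _ b _ => ?_]
  · simp
  rw [sum_congr rfl fun t _ => by rw [AddChar.mul_conj_eq_apply_sub, ← mul_sub],
    AddChar.sum_mulShift _ hψ]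
  simp [sub_eq_zero]

theorem sum_addChar_fnorm_sub_mul_conj {ψ : AddChar F ℂ} (hψ : ψ.IsPrimitive) (h2 : (2 : F) ≠ 0)
    {s : F} (hs : s ≠ 0) (y y' : Fin 2 → F) :
    ∑ x, ψ (s * fnorm (x - y)) * conj (ψ (s * fnorm (x - y'))) =
      if y = y' then (Fintype.card F : ℂ) ^ 2 else 0 := by
  have hsplit (x : Fin 2 → F) : s * fnorm (x - y) - s * fnorm (x - y') =
      x ⬝ᵥ ((2 * s) • (y' - y)) + s * (fnorm y - fnorm y') := by
    simp only [fnorm, dotProduct, Fin.sum_univ_two, Pi.smul_apply, Pi.sub_apply, smul_eq_mul]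
    ring
  simp_rw [AddChar.mul_conj_eq_apply_sub, hsplit, AddChar.map_add_eq_mul, ← sum_mul,
    sum_addChar_dotProduct hψ, smul_eq_zero, sub_eq_zero, Fintype.card_fin, mul_ne_zero h2 hs,
    false_or, eq_comm (a := y')]
  split_ifs with h <;> simp [h]

theorem sum_norm_sq_sum_addChar_fnorm_sub {ψ : AddChar F ℂ} (hψ : ψ.IsPrimitive)
    (h2 : (2 : F) ≠ 0) {s : F} (hs : s ≠ 0) (E : Finset (Fin 2 → F)) :
    ∑ x, ‖∑ y ∈ E, ψ (s * fnorm (x - y))‖ ^ 2 = (Fintype.card F) ^ 2 * #E := by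
  have := sum_norm_sq_sum_of_orthogonal E (fun y x => ψ (s * fnorm (x - y)))
    ((Fintype.card F) ^ 2) (fun y _ y' _ => by
      rw [sum_addChar_fnorm_sub_mul_conj hψ h2 hs]; push_cast; rfl) 1
  simpa using this

theorem norm_sq_sum_addChar_fnorm_sub_le {ψ : AddChar F ℂ} (hψ : ψ.IsPrimitive)
    (h2 : (2 : F) ≠ 0) {s : F} (hs : s ≠ 0) (E : Finset (Fin 2 → F)) :
    ‖∑ x ∈ E, ∑ y ∈ E, ψ (s * fnorm (x - y))‖ ^ 2 ≤ (#E * Fintype.card F) ^ 2 := by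
  calc ‖∑ x ∈ E, ∑ y ∈ E, ψ (s * fnorm (x - y))‖ ^ 2
      ≤ (∑ x ∈ E, ‖∑ y ∈ E, ψ (s * fnorm (x - y))‖) ^ 2 := by gcongr; exact norm_sum_le _ _
    _ ≤ #E * ∑ x ∈ E, ‖∑ y ∈ E, ψ (s * fnorm (x - y))‖ ^ 2 := sq_sum_le_card_mul_sum_sq
    _ ≤ #E * ∑ x, ‖∑ y ∈ E, ψ (s * fnorm (x - y))‖ ^ 2 := by
        gcongr; exact subset_univ E
    _ = (#E * Fintype.card F) ^ 2 := by
        rw [sum_norm_sq_sum_addChar_fnorm_sub hψ h2 hs]; ring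

theorem distance_energy_le (hodd : Odd (Fintype.card F)) (E : Finset (Fin 2 → F)) :
    Fintype.card F * ∑ a, #{p ∈ E ×ˢ E | fnorm (p.1 - p.2) = a} ^ 2 ≤
      #E ^ 4 + Fintype.card F ^ 3 * #E ^ 2 := by
  obtain ⟨ψ, hψ⟩ : ∃ ψ : AddChar F ℂ, ψ.IsPrimitive :=
    ⟨_, AddChar.FiniteField.primitiveChar_to_Complex_isPrimitive F⟩
  set q := Fintype.card F
  set T : F → ℂ := fun t => ∑ x ∈ E, ∑ y ∈ E, ψ (t * fnorm (x - y))
  have hparseval : ∑ t, ‖T t‖ ^ 2 = q * ∑ a, (#{p ∈ E ×ˢ E | fnorm (p.1 - p.2) = a} : ℝ) ^ 2 := by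
    simp only [T, ← sum_product']
    exact sum_norm_sq_sum_addChar_mul hψ _ _
  have hzero : ‖T 0‖ ^ 2 = #E ^ 4 := by simp [T]; ring
  have hnonzero : ∑ t ∈ univ.erase 0, ‖T t‖ ^ 2 ≤ q * (#E * q) ^ 2 := by
    calc ∑ t ∈ univ.erase 0, ‖T t‖ ^ 2 ≤ ∑ t ∈ univ.erase (0 : F), ((#E : ℝ) * q) ^ 2 :=
          sum_le_sum fun t ht => norm_sq_sum_addChar_fnorm_sub_le hψ
            (two_ne_zero_of_odd_card hodd) (ne_of_mem_erase ht) E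
      _ ≤ q * (#E * q) ^ 2 := by
          rw [sum_const, nsmul_eq_mul]; gcongr; exact_mod_cast card_le_univ _
  have : (q : ℝ) * ∑ a, (#{p ∈ E ×ˢ E | fnorm (p.1 - p.2) = a} : ℝ) ^ 2 ≤
      #E ^ 4 + q ^ 3 * #E ^ 2 := by
    rw [← hparseval, ← add_sum_erase _ _ (mem_univ 0), hzero]
    linarith
  exact_mod_cast this

def distSet (E : Finset (Fin 2 → F)) : Finset F := (E ×ˢ E).image fun p => fnorm (p.1 - p.2)

theorem card_mul_le_card_distSet_mul (hodd : Odd (Fintype.card F)) (E : Finset (Fin 2 → F)) :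
    Fintype.card F * #E ^ 4 ≤ #(distSet E) * (#E ^ 4 + Fintype.card F ^ 3 * #E ^ 2) := by
  set q := Fintype.card F
  calc q * #E ^ 4 = q * #(E ×ˢ E) ^ 2 := by rw [card_product]; ring
    _ ≤ q * (#(distSet E) * ∑ a, #{p ∈ E ×ˢ E | fnorm (p.1 - p.2) = a} ^ 2) := by
        gcongr
        exact (sq_card_le_card_image_mul_sum_sq _ _).trans
          (Nat.mul_le_mul_left _ (sum_le_univ_sum_of_nonneg fun _ => Nat.zero_le _))
    _ = #(distSet E) * (q * ∑ a, #{p ∈ E ×ˢ E | fnorm (p.1 - p.2) = a} ^ 2) := by ring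
    _ ≤ #(distSet E) * (#E ^ 4 + q ^ 3 * #E ^ 2) := by gcongr; exact distance_energy_le hodd E

def triangleSet (E : Finset (Fin 2 → F)) : Finset (F × F × F) :=
  univ.filter fun abc => ∃ x ∈ E, ∃ y ∈ E, ∃ z ∈ E,
    fnorm (x - y) = abc.1 ∧ fnorm (x - z) = abc.2.1 ∧ fnorm (y - z) = abc.2.2

theorem card_erase_zero_distSet_mul_card_le (h2 : (2 : F) ≠ 0) (E : Finset (Fin 2 → F)) :
    #((distSet E).erase 0) * #E ≤ 2 * #(triangleSet E) := by
  have hslice : ∀ a ∈ (distSet E).erase 0, #E ≤ 2 * #{abc ∈ triangleSet E | abc.1 = a} := by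
    intro a ha
    obtain ⟨ha0, ha⟩ := mem_erase.1 ha
    obtain ⟨⟨x, y⟩, hxy, rfl⟩ := mem_image.1 ha
    obtain ⟨hx, hy⟩ := mem_product.1 hxy
    calc #E ≤ 2 * #(E.image fun z => (fnorm (x - z), fnorm (y - z))) :=
          card_le_mul_card_image E 2 fun bc _ =>
            card_filter_fnorm_sub_pair_eq_le_two h2 ha0 E bc
      _ ≤ 2 * #{abc ∈ triangleSet E | abc.1 = fnorm (x - y)} := by
          gcongr
          refine card_le_card_of_injOn (fun bc => (fnorm (x - y), bc)) (fun bc hbc => ?_)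
            fun _ _ _ _ h => (Prod.ext_iff.1 h).2
          obtain ⟨z, hz, rfl⟩ := mem_image.1 hbc
          simpa [triangleSet] using ⟨x, hx, y, hy, z, hz, rfl, rfl, rfl⟩
  calc #((distSet E).erase 0) * #E = ∑ _a ∈ (distSet E).erase 0, #E := by
        rw [sum_const, smul_eq_mul]
    _ ≤ ∑ a ∈ (distSet E).erase 0, 2 * #{abc ∈ triangleSet E | abc.1 = a} := sum_le_sum hslice
    _ ≤ 2 * ∑ a : F, #{abc ∈ triangleSet E | abc.1 = a} := by
        rw [← mul_sum]; gcongr; exact subset_univ _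
    _ = 2 * #(triangleSet E) := by rw [← card_eq_sum_card_fiberwise fun _ _ => mem_univ _]

theorem card_mul_le_four_mul_card_triangleSet (hodd : Odd (Fintype.card F))
    (E : Finset (Fin 2 → F)) (hE : 4 * Fintype.card F ^ 3 ≤ #E ^ 2) :
    Fintype.card F * #E ≤ 4 * #(triangleSet E) := by
  set q := Fintype.card F
  have hE_pos : 0 < #E ^ 4 := by
    rw [show #E ^ 4 = (#E ^ 2) ^ 2 by ring]
    exact pow_pos (lt_of_lt_of_le (by positivity) hE) 2
  have hq4 : 4 ≤ q := by
    have hEq : #E ≤ q ^ 2 := by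
      simpa [Fintype.card_fun] using card_le_univ E
    refine Nat.le_of_mul_le_mul_right (c := q ^ 3) ?_ (by positivity)
    calc 4 * q ^ 3 ≤ #E ^ 2 := hE
      _ ≤ (q ^ 2) ^ 2 := by gcongr
      _ = q * q ^ 3 := by ring
  have hdist : 4 * q ≤ 5 * #(distSet E) := by
    refine Nat.le_of_mul_le_mul_right (c := #E ^ 4) ?_ hE_pos
    calc 4 * q * #E ^ 4 = 4 * (q * #E ^ 4) := by ring
      _ ≤ 4 * (#(distSet E) * (#E ^ 4 + q ^ 3 * #E ^ 2)) :=
          Nat.mul_le_mul_left 4 (card_mul_le_card_distSet_mul hodd E)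
      _ = #(distSet E) * (4 * #E ^ 4 + 4 * q ^ 3 * #E ^ 2) := by ring
      _ ≤ #(distSet E) * (4 * #E ^ 4 + #E ^ 2 * #E ^ 2) := by gcongr
      _ = 5 * #(distSet E) * #E ^ 4 := by ring
  have herase := pred_card_le_card_erase (s := distSet E) (a := 0)
  have htri := card_erase_zero_distSet_mul_card_le (two_ne_zero_of_odd_card hodd) E
  calc q * #E ≤ 2 * #((distSet E).erase 0) * #E := by gcongr; omega
    _ ≤ 4 * #(triangleSet E) := by rw [mul_assoc]; omega

end FiniteField

theorem stmt_1 :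
    ∃ C > (0 : ℝ), ∃ c > (0 : ℝ),
      ∀ (F : Type) [Field F] [Fintype F], Odd (Fintype.card F) →
        ∀ (E : Set (Fin 2 → F)) (ρ : ℝ),
          C / Real.sqrt (Fintype.card F) ≤ ρ → ρ ≤ 1 →
          ρ * (Fintype.card F : ℝ) ^ 2 ≤ (E.ncard : ℝ) →
          c * ρ * (Fintype.card F : ℝ) ^ 3 ≤
            (Set.ncard {abc : F × F × F | ∃ x ∈ E, ∃ y ∈ E, ∃ z ∈ E,
              fnorm (x - y) = abc.1 ∧ fnorm (x - z) = abc.2.1 ∧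
              fnorm (y - z) = abc.2.2} : ℝ) := by
  refine ⟨2, two_pos, 1 / 4, by norm_num, fun F _ _ hodd E ρ hρ _ hE => ?_⟩
  classical
  obtain ⟨S, rfl⟩ := E.toFinite.exists_finset_coe
  rw [Set.ncard_coe_finset] at hE
  set q := Fintype.card F
  have hq : (0 : ℝ) < q := by exact_mod_cast Fintype.card_pos
  have hS : 4 * q ^ 3 ≤ #S ^ 2 := by
    have hρq : 2 ≤ ρ * √q := (div_le_iff₀ (Real.sqrt_pos.2 hq)).1 hρ
    have h : 2 * (q : ℝ) ^ 2 ≤ √q * #S := by nlinarith [Real.sqrt_nonneg q]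
    have : (4 : ℝ) * q ^ 3 ≤ #S ^ 2 := by nlinarith [Real.sq_sqrt hq.le]
    exact_mod_cast this
  have key : (q : ℝ) * #S ≤ 4 * #(triangleSet S) := by
    exact_mod_cast card_mul_le_four_mul_card_triangleSet hodd S hS
  calc 1 / 4 * ρ * q ^ 3 ≤ #(triangleSet S) := by nlinarith
    _ = _ := by rw [← Set.ncard_coe_finset]; congr 2; ext; simp [triangleSet]
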